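/- arXiv:0708.4328 — 6 statements merged into one kernel-verified Lean document; each statement's English description precedes it below -/
import Mathlib

section
/- Random variables constructed from a finite group and its subgroups are quasi-uniform: if U is uniform on a finite group G, G_i ≤ G are subgroups, and U_i is the coset of G_i containing U, then for every nonempty α ⊆ {1,…,N} the joint distribution of U_α = (U_i : i ∈ α) is uniform on its support. -/
/-- Random variables constructed from a finite group and its subgroups are quasi-uniform:
for every nonempty index set `α`, the joint variable `U_α = (u ↦ (uG_i : i ∈ α))`, defined on
the uniform sample space `G`, has all its fibers of equal size, i.e. its distribution is
uniform on its support. -/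
theorem coset_variables_quasiUniform {G : Type*} [Group G] [Fintype G] {N : ℕ}
    (Gs : Fin N → Subgroup G) (α : Finset (Fin N)) (hα : α.Nonempty) (u v : G) :
    Nat.card {w : G //
        (fun i : α => (QuotientGroup.mk w : G ⧸ Gs i.1)) =
        (fun i : α => (QuotientGroup.mk u : G ⧸ Gs i.1))} =
      Nat.card {w : G //
        (fun i : α => (QuotientGroup.mk w : G ⧸ Gs i.1)) =
        (fun i : α => (QuotientGroup.mk v : G ⧸ Gs i.1))} := by
  apply Nat.card_congr
  refine Equiv.subtypeEquiv (Equiv.mulLeft (v * u⁻¹)) fun w => ?_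
  have key : ∀ x : G, (v * u⁻¹ * x)⁻¹ * v = x⁻¹ * u := by intro x; group
  simp only [funext_iff, QuotientGroup.eq, Equiv.coe_mulLeft, key]
end

section
/- If (U₁, U₂) is a quasi-uniform pair of discrete random variables, then for every u₂ in the support of U₂, the set {u₁ : (u₁,u₂) ∈ supp(U₁,U₂)} has cardinality |supp(U₁,U₂)| / |supp(U₂)|. -/
open scoped Classical

/-- For a quasi-uniform pair `(U₁, U₂)` with joint pmf `p`, for every `u₂` in the support of
`U₂`, the section `{u₁ : (u₁,u₂) ∈ supp(U₁,U₂)}` has cardinality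
`|supp(U₁,U₂)| / |supp(U₂)|`. -/
theorem quasiUniform_section_card {A B : Type*} [Fintype A] [Fintype B]
    (p : A × B → ℝ) (hp0 : ∀ x, 0 ≤ p x) (hp1 : ∑ x, p x = 1)
    -- the joint distribution is uniform on its support
    (hjoint : ∀ x y : A × B, p x ≠ 0 → p y ≠ 0 → p x = p y)
    -- the marginal of U₁ is uniform on its support
    (hmarg1 : ∀ a a' : A, (∑ b, p (a, b)) ≠ 0 → (∑ b, p (a', b)) ≠ 0 →
      (∑ b, p (a, b)) = (∑ b, p (a', b)))
    -- the marginal of U₂ is uniform on its support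
    (hmarg2 : ∀ b b' : B, (∑ a, p (a, b)) ≠ 0 → (∑ a, p (a, b')) ≠ 0 →
      (∑ a, p (a, b)) = (∑ a, p (a, b')))
    (b : B) (hb : (∑ a, p (a, b)) ≠ 0) :
    ((Finset.univ.filter fun a : A => p (a, b) ≠ 0).card : ℝ) =
      ((Finset.univ.filter fun x : A × B => p x ≠ 0).card : ℝ) /
        ((Finset.univ.filter fun b' : B => (∑ a, p (a, b')) ≠ 0).card : ℝ) := by
  classical
  obtain ⟨a0, -, ha0⟩ := Finset.exists_ne_zero_of_sum_ne_zero hb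
  set v := p (a0, b) with hv
  have hv0 : v ≠ 0 := ha0
  set sec := fun b' : B => Finset.univ.filter fun a : A => p (a, b') ≠ 0 with hsecdef
  -- marginal as v * section card
  have hsec : ∀ b', (∑ a, p (a, b')) = v * ((sec b').card : ℝ) := by
    intro b'
    rw [← Finset.sum_filter_ne_zero Finset.univ (f := fun a => p (a, b'))]
    have : ∀ a ∈ sec b', p (a, b') = v := by
      intro a ha
      have ha' : p (a, b') ≠ 0 := (Finset.mem_filter.mp ha).2
      exact hjoint (a, b') (a0, b) ha' ha0
    rw [Finset.sum_congr rfl this, Finset.sum_const, nsmul_eq_mul, mul_comm]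
  -- joint support card is sum of section cards
  have hjc : (Finset.univ.filter fun x : A × B => p x ≠ 0).card
      = ∑ b' : B, (sec b').card := by
    rw [Finset.card_filter, Fintype.sum_prod_type_right]
    simp [hsecdef, Finset.card_filter]
  -- sections with nonzero marginal have the same card as at b
  have heq : ∀ b', (∑ a, p (a, b')) ≠ 0 → (sec b').card = (sec b).card := by
    intro b' h
    have h2 := hmarg2 b b' hb h
    rw [hsec b, hsec b'] at h2
    exact_mod_cast (mul_left_cancel₀ hv0 h2).symm
  -- sections with zero marginal are empty
  have hnz : ∀ b', (sec b').card ≠ 0 → (∑ a, p (a, b')) ≠ 0 := by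
    intro b' h
    rw [hsec b']
    exact mul_ne_zero hv0 (by exact_mod_cast h)
  have hsum : ∑ b' : B, (sec b').card
      = (Finset.univ.filter fun b' : B => (∑ a, p (a, b')) ≠ 0).card * (sec b).card := by
    rw [← Finset.sum_filter_of_ne (fun b' _ h => hnz b' h)]
    rw [Finset.sum_congr rfl (fun b' hb' => heq b' (Finset.mem_filter.mp hb').2)]
    rw [Finset.sum_const, smul_eq_mul]
  have hN : ((Finset.univ.filter fun b' : B => (∑ a, p (a, b')) ≠ 0).card : ℝ) ≠ 0 := by
    have : b ∈ Finset.univ.filter fun b' : B => (∑ a, p (a, b')) ≠ 0 :=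
      Finset.mem_filter.mpr ⟨Finset.mem_univ b, hb⟩
    have := Finset.card_pos.mpr ⟨b, this⟩
    positivity
  rw [hjc, hsum]
  push_cast
  field_simp
  simp only [hsecdef]
end

section
/- Slepian–Wolf extension of a polymatroid: let g be a polymatroid on {x,y}. Define g' on {x,y,z} by g'({z}) = g({x,y}) − g({y}), g'({y,z}) = g'({x,y,z}) = g({x,y}), g'({x,z}) = g({x}), and g'(B) = g(B) for B ⊆ {x,y}. Then g' is a polymatroid. -/
set_option maxHeartbeats 2000000 in
/-- Slepian–Wolf extension of a polymatroid: let `g` be a polymatroid on `{x,y}`.  The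
extension `g'` to `{x,y,z}` given by `g'({z}) = g({x,y}) − g({y})`,
`g'({y,z}) = g'({x,y,z}) = g({x,y})`, `g'({x,z}) = g({x})`, and `g'(B) = g(B)` for
`B ⊆ {x,y}`, is a polymatroid on `{x,y,z}`. -/
theorem SW_extension {α : Type*} [DecidableEq α] (x y z : α)
    (hxy : x ≠ y) (hxz : x ≠ z) (hyz : y ≠ z)
    (g : Finset α → ℝ)
    (h0 : g ∅ = 0)
    (hmono : ∀ A B : Finset α, A ⊆ B → B ⊆ {x, y} → g A ≤ g B)
    (hsub : ∀ A B : Finset α, A ⊆ {x, y} → B ⊆ {x, y} →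
      g (A ∪ B) + g (A ∩ B) ≤ g A + g B)
    (g' : Finset α → ℝ)
    (hg' : ∀ S : Finset α, S ⊆ {x, y, z} →
      g' S = if z ∈ S then
          (if S = {z} then g {x, y} - g {y} else if S = {x, z} then g {x} else g {x, y})
        else g S) :
    g' ∅ = 0 ∧
    (∀ A B : Finset α, A ⊆ B → B ⊆ {x, y, z} → g' A ≤ g' B) ∧
    (∀ A B : Finset α, A ⊆ {x, y, z} → B ⊆ {x, y, z} →
      g' (A ∪ B) + g' (A ∩ B) ≤ g' A + g' B) := by
  have hyx : y ≠ x := hxy.symm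
  have hzx : z ≠ x := hxz.symm
  have hzy : z ≠ y := hyz.symm
  have sx : ({x} : Finset α) ⊆ {x, y} := by simp
  have sy : ({y} : Finset α) ⊆ {x, y} := by simp
  have ha0 : 0 ≤ g {x} := h0 ▸ hmono ∅ {x} (by simp) sx
  have hb0 : 0 ≤ g {y} := h0 ▸ hmono ∅ {y} (by simp) sy
  have hac : g {x} ≤ g {x, y} := hmono {x} {x, y} sx (by simp)
  have hbc : g {y} ≤ g {x, y} := hmono {y} {x, y} sy (by simp)
  have hcab : g {x, y} ≤ g {x} + g {y} := by
    have h := hsub {x} {y} sx sy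
    have hu : ({x} : Finset α) ∪ {y} = {x, y} := by rw [Finset.insert_eq]
    have hi : ({x} : Finset α) ∩ {y} = ∅ := by
      simp [Finset.singleton_inter_of_notMem, hxy]
    rw [hu, hi, h0] at h; linarith
  -- set disequalities
  have n1 : ({x, z} : Finset α) ≠ {z} := by
    intro h
    have : x ∈ ({z} : Finset α) := h ▸ (by simp)
    simp [hxz] at this
  have n2 : ({y, z} : Finset α) ≠ {z} := by
    intro h
    have : y ∈ ({z} : Finset α) := h ▸ (by simp)
    simp [hyz] at this
  have n3 : ({y, z} : Finset α) ≠ {x, z} := by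
    intro h
    have : y ∈ ({x, z} : Finset α) := h ▸ (by simp)
    simp [hyx, hyz] at this
  have n4 : ({x, y, z} : Finset α) ≠ {z} := by
    intro h
    have : x ∈ ({z} : Finset α) := h ▸ (by simp)
    simp [hxz] at this
  have n5 : ({x, y, z} : Finset α) ≠ {x, z} := by
    intro h
    have : y ∈ ({x, z} : Finset α) := h ▸ (by simp)
    simp [hyx, hyz] at this
  -- decomposition of subsets of {x,y,z}
  have key : ∀ S : Finset α, S ⊆ {x, y, z} →
      S = ∅ ∨ S = {x} ∨ S = {y} ∨ S = {z} ∨ S = {x, y} ∨ S = {x, z} ∨ S = {y, z} ∨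
        S = {x, y, z} := by
    intro S hS
    have hmem : ∀ w ∈ S, w = x ∨ w = y ∨ w = z := by
      intro w hw; simpa using hS hw
    have pf : ∀ T : Finset α, (∀ w ∈ S, w ∈ T) → (∀ w ∈ T, w ∈ S) → S = T :=
      fun T h1 h2 => Finset.Subset.antisymm h1 h2
    by_cases h1 : x ∈ S <;> by_cases h2 : y ∈ S <;> by_cases h3 : z ∈ S <;>
    [ exact .inr (.inr (.inr (.inr (.inr (.inr (.inr (pf _ (fun w hw => by rcases hmem w hw with rfl|rfl|rfl <;> simp_all) (fun w hw => by simp only [Finset.mem_insert, Finset.mem_singleton] at hw; rcases hw with rfl|rfl|rfl <;> assumption))))))));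
      exact .inr (.inr (.inr (.inr (.inl (pf _ (fun w hw => by rcases hmem w hw with rfl|rfl|rfl <;> simp_all) (fun w hw => by simp only [Finset.mem_insert, Finset.mem_singleton] at hw; rcases hw with rfl|rfl <;> assumption))))));
      exact .inr (.inr (.inr (.inr (.inr (.inl (pf _ (fun w hw => by rcases hmem w hw with rfl|rfl|rfl <;> simp_all) (fun w hw => by simp only [Finset.mem_insert, Finset.mem_singleton] at hw; rcases hw with rfl|rfl <;> assumption)))))));
      exact .inr (.inl (pf _ (fun w hw => by rcases hmem w hw with rfl|rfl|rfl <;> simp_all) (fun w hw => by simp only [Finset.mem_singleton] at hw; subst hw; assumption)));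
      exact .inr (.inr (.inr (.inr (.inr (.inr (.inl (pf _ (fun w hw => by rcases hmem w hw with rfl|rfl|rfl <;> simp_all) (fun w hw => by simp only [Finset.mem_insert, Finset.mem_singleton] at hw; rcases hw with rfl|rfl <;> assumption))))))));
      exact .inr (.inr (.inl (pf _ (fun w hw => by rcases hmem w hw with rfl|rfl|rfl <;> simp_all) (fun w hw => by simp only [Finset.mem_singleton] at hw; subst hw; assumption))));
      exact .inr (.inr (.inr (.inl (pf _ (fun w hw => by rcases hmem w hw with rfl|rfl|rfl <;> simp_all) (fun w hw => by simp only [Finset.mem_singleton] at hw; subst hw; assumption)))));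
      exact .inl (pf _ (fun w hw => by rcases hmem w hw with rfl|rfl|rfl <;> simp_all) (fun w hw => absurd hw (Finset.notMem_empty w)))]
  -- membership-based value formula
  have val : ∀ S : Finset α, S ⊆ {x, y, z} →
      g' S = if z ∈ S then
          (if y ∈ S then g {x, y} else if x ∈ S then g {x} else g {x, y} - g {y})
        else (if x ∈ S then (if y ∈ S then g {x, y} else g {x})
          else (if y ∈ S then g {y} else 0)) := by
    intro S hS
    rcases key S hS with rfl | rfl | rfl | rfl | rfl | rfl | rfl | rfl <;>
      rw [hg' _ hS] <;>
      simp [h0, hxy, hyx, hxz, hzx, hyz, hzy, n1, n2, n3, n4, n5]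
  refine ⟨?_, ?_, ?_⟩
  · rw [val ∅ (by simp)]; simp
  · intro A B hAB hB
    have hA : A ⊆ {x, y, z} := hAB.trans hB
    rw [val A hA, val B hB]
    have mx : x ∈ A → x ∈ B := fun h => hAB h
    have my : y ∈ A → y ∈ B := fun h => hAB h
    have mz : z ∈ A → z ∈ B := fun h => hAB h
    (by_cases px : x ∈ A <;> by_cases py : y ∈ A <;> by_cases pz : z ∈ A <;>
      by_cases qx : x ∈ B <;> by_cases qy : y ∈ B <;> by_cases qz : z ∈ B <;>
      simp only [px, py, pz, qx, qy, qz, if_true, if_false] <;>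
      first
        | exact absurd (mx px) qx
        | exact absurd (my py) qy
        | exact absurd (mz pz) qz
        | linarith)
  · intro A B hA hB
    rw [val A hA, val B hB, val (A ∪ B) (Finset.union_subset hA hB),
      val (A ∩ B) (Finset.inter_subset_left.trans hA)]
    simp only [Finset.mem_union, Finset.mem_inter]
    (by_cases px : x ∈ A <;> by_cases py : y ∈ A <;> by_cases pz : z ∈ A <;>
      by_cases qx : x ∈ B <;> by_cases qy : y ∈ B <;> by_cases qz : z ∈ B <;>
      simp only [px, py, pz, qx, qy, qz, if_true, if_false, true_or, or_true,
        false_or, or_false, true_and, and_true, false_and, and_false,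
        not_true, not_false_iff] <;>
      linarith)
end

section
/- Linear side-information coding: let A be a finite-dimensional vector space over 𝔽_q and T₁: A → W₁, T₂: A → W₂ linear maps with kernels B₁ and B₂. Then there exists a vector space Z with dim Z = dim B₂ − dim(B₁ ∩ B₂) and linear maps φ: W₁ × W₂ → Z and ψ: Z × W₂ → W₁ such that for every a ∈ A, ψ(φ(T₁(a), T₂(a)), T₂(a)) = T₁(a). -/
/-- Linear side-information coding: for linear maps `T₁ : A → W₁`, `T₂ : A → W₂` over a
finite field, there is a vector space `Z` of dimension `dim(ker T₂) − dim(ker T₁ ∩ ker T₂)`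
(modeled as `Fin n → F`) and linear maps `φ : W₁ × W₂ → Z`, `ψ : Z × W₂ → W₁` such that
`T₁(a)` can be recovered from `φ(T₁(a), T₂(a))` and `T₂(a)`. -/
theorem linear_side_information {F : Type*} [Field F] [Fintype F]
    {A W₁ W₂ : Type*} [AddCommGroup A] [Module F A] [FiniteDimensional F A]
    [AddCommGroup W₁] [Module F W₁] [FiniteDimensional F W₁]
    [AddCommGroup W₂] [Module F W₂] [FiniteDimensional F W₂]
    (T₁ : A →ₗ[F] W₁) (T₂ : A →ₗ[F] W₂) :
    ∃ (n : ℕ) (φ : W₁ × W₂ →ₗ[F] (Fin n → F)) (ψ : (Fin n → F) × W₂ →ₗ[F] W₁),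
      n = Module.finrank F ↥(LinearMap.ker T₂) -
            Module.finrank F ↥(LinearMap.ker T₁ ⊓ LinearMap.ker T₂) ∧
      ∀ a : A, ψ (φ (T₁ a, T₂ a), T₂ a) = T₁ a := by
  classical
  set K := LinearMap.ker T₂ with hK
  set f : ↥K →ₗ[F] W₁ := T₁ ∘ₗ K.subtype with hf
  set V := LinearMap.range f with hVdef
  -- a right inverse of T₂ on its range
  obtain ⟨r, hr⟩ := T₂.rangeRestrict.exists_rightInverse_of_surjective
    (LinearMap.range_eq_top.mpr T₂.surjective_rangeRestrict)
  -- projection of W₂ onto the range of T₂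
  obtain ⟨R', hR'⟩ := Submodule.exists_isCompl (LinearMap.range T₂)
  set πR := (LinearMap.range T₂).linearProjOfIsCompl R' hR'
  set s : W₂ →ₗ[F] A := r ∘ₗ πR with hs
  have hsT : ∀ a : A, T₂ (s (T₂ a)) = T₂ a := by
    intro a
    have h1 : πR (T₂ a) = ⟨T₂ a, LinearMap.mem_range_self T₂ a⟩ :=
      Submodule.linearProjOfIsCompl_apply_left hR' ⟨T₂ a, LinearMap.mem_range_self T₂ a⟩
    have h2 : T₂.rangeRestrict (r ⟨T₂ a, LinearMap.mem_range_self T₂ a⟩)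
        = ⟨T₂ a, LinearMap.mem_range_self T₂ a⟩ := by
      have := LinearMap.congr_fun hr ⟨T₂ a, LinearMap.mem_range_self T₂ a⟩
      exact this
    have h3 := congrArg Subtype.val h2
    simp only [hs, LinearMap.coe_comp, Function.comp_apply, h1]
    exact h3
  -- projection of W₁ onto V
  obtain ⟨V', hV'⟩ := Submodule.exists_isCompl V
  set p := V.linearProjOfIsCompl V' hV'
  set n := Module.finrank F ↥V with hn
  set e : ↥V ≃ₗ[F] (Fin n → F) := (Module.finBasis F ↥V).equivFun with he
  set D : W₁ × W₂ →ₗ[F] W₁ :=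
    LinearMap.fst F W₁ W₂ - T₁ ∘ₗ s ∘ₗ LinearMap.snd F W₁ W₂ with hD
  refine ⟨n, e.toLinearMap ∘ₗ p ∘ₗ D,
    V.subtype ∘ₗ e.symm.toLinearMap ∘ₗ LinearMap.fst F (Fin n → F) W₂
      + T₁ ∘ₗ s ∘ₗ LinearMap.snd F (Fin n → F) W₂, ?_, ?_⟩
  · -- dimension count
    have hker : LinearMap.ker f = (LinearMap.ker T₁ ⊓ K).comap K.subtype := by
      rw [hf, LinearMap.ker_comp]
      simp [Submodule.comap_inf, Submodule.comap_subtype_self]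
    have hrank := f.finrank_range_add_finrank_ker
    have hkerrank : Module.finrank F ↥(LinearMap.ker f)
        = Module.finrank F ↥(LinearMap.ker T₁ ⊓ K) := by
      rw [hker]
      exact LinearEquiv.finrank_eq
        (Submodule.comapSubtypeEquivOfLe inf_le_right)
    rw [hn, hVdef]
    omega
  · intro a
    have hmem : T₁ a - T₁ (s (T₂ a)) ∈ V := by
      refine ⟨⟨a - s (T₂ a), ?_⟩, ?_⟩
      · simp [hK, LinearMap.mem_ker, hsT a]
      · simp [hf]
    have hp : p (T₁ a - T₁ (s (T₂ a))) = ⟨T₁ a - T₁ (s (T₂ a)), hmem⟩ :=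
      Submodule.linearProjOfIsCompl_apply_left hV' ⟨_, hmem⟩
    simp only [LinearMap.add_apply, LinearMap.coe_comp, Function.comp_apply,
      LinearMap.fst_apply, LinearMap.snd_apply, LinearEquiv.coe_coe,
      LinearMap.sub_apply, hD, hp, LinearEquiv.symm_apply_apply,
      Submodule.coe_subtype]
    abel
end

section
/- If U₁,…,U_N are random variables constructed from an abelian finite group G and subgroups G₁,…,G₄ (U_i is the coset of G_i containing a uniform element U of G), then the Ingleton inequality holds: H(U₁,U₂) + H(U₁,U₃) + H(U₁,U₄) + H(U₂,U₃) + H(U₂,U₄) ≥ H(U₁) + H(U₂) + H(U₃,U₄) + H(U₁,U₂,U₃) + H(U₁,U₂,U₄). -/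
/-- Shannon entropy of a random variable `f` defined on a finite sample space `Ω`
equipped with the uniform probability measure. -/
noncomputable def unifEntropy {Ω : Type*} [Fintype Ω] {T : Type*} (f : Ω → T) : ℝ :=
  Real.log (Fintype.card Ω) -
    (Fintype.card Ω : ℝ)⁻¹ * ∑ ω : Ω, Real.log (Nat.card {ω' : Ω // f ω' = f ω})

open Subgroup

section Aux

set_option linter.unusedSectionVars false

variable {G : Type*} [CommGroup G] [Fintype G]

lemma aux_card_inf_mul_relindex (H K : Subgroup G) :
    Nat.card (H ⊓ K : Subgroup G) * H.relIndex K = Nat.card K := by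
  have h1 : Nat.card ((H ⊓ K).subgroupOf K) = Nat.card (H ⊓ K : Subgroup G) :=
    Nat.card_congr (subgroupOfEquivOfLe inf_le_right).toEquiv
  rw [Subgroup.relIndex, ← inf_subgroupOf_right H K, ← h1]
  exact Subgroup.card_mul_index _

lemma aux_card_sup_mul_card_inf (H K : Subgroup G) :
    Nat.card (H ⊔ K : Subgroup G) * Nat.card (H ⊓ K : Subgroup G)
      = Nat.card H * Nat.card K := by
  have h1 := aux_card_inf_mul_relindex K (H ⊔ K)
  rw [inf_of_le_left (le_sup_right : K ≤ H ⊔ K),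
      Subgroup.relIndex_sup_right (H := H) (K := K)] at h1
  have h2 := aux_card_inf_mul_relindex K H
  rw [inf_comm] at h2
  calc Nat.card (H ⊔ K : Subgroup G) * Nat.card (H ⊓ K : Subgroup G)
      = Nat.card K * (Nat.card (H ⊓ K : Subgroup G) * K.relIndex H) := by
        rw [← h1]; ring
    _ = Nat.card H * Nat.card K := by rw [h2]; ring

lemma aux_ingleton_card (G₁ G₂ G₃ G₄ : Subgroup G) :
    Nat.card (G₁ ⊓ G₂ : Subgroup G) * Nat.card (G₁ ⊓ G₃ : Subgroup G) *
      Nat.card (G₁ ⊓ G₄ : Subgroup G) * Nat.card (G₂ ⊓ G₃ : Subgroup G) *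
      Nat.card (G₂ ⊓ G₄ : Subgroup G) ≤
    Nat.card G₁ * Nat.card G₂ * Nat.card (G₃ ⊓ G₄ : Subgroup G) *
      Nat.card (G₁ ⊓ G₂ ⊓ G₃ : Subgroup G) * Nat.card (G₁ ⊓ G₂ ⊓ G₄ : Subgroup G) := by
  set A := (G₁ ⊓ G₃) ⊔ (G₂ ⊓ G₃) with hA
  set B := (G₁ ⊓ G₄) ⊔ (G₂ ⊓ G₄) with hB
  have e1 : Nat.card (G₁ ⊓ G₃ : Subgroup G) * Nat.card (G₂ ⊓ G₃ : Subgroup G)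
      = Nat.card A * Nat.card (G₁ ⊓ G₂ ⊓ G₃ : Subgroup G) := by
    have hx : (G₁ ⊓ G₃) ⊓ (G₂ ⊓ G₃) = G₁ ⊓ G₂ ⊓ G₃ := by
      ext x; simp [Subgroup.mem_inf]; tauto
    rw [← hx, ← aux_card_sup_mul_card_inf (G₁ ⊓ G₃) (G₂ ⊓ G₃), hA]
  have e2 : Nat.card (G₁ ⊓ G₄ : Subgroup G) * Nat.card (G₂ ⊓ G₄ : Subgroup G)
      = Nat.card B * Nat.card (G₁ ⊓ G₂ ⊓ G₄ : Subgroup G) := by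
    have hx : (G₁ ⊓ G₄) ⊓ (G₂ ⊓ G₄) = G₁ ⊓ G₂ ⊓ G₄ := by
      ext x; simp [Subgroup.mem_inf]; tauto
    rw [← hx, ← aux_card_sup_mul_card_inf (G₁ ⊓ G₄) (G₂ ⊓ G₄), hB]
  have e3 : Nat.card A * Nat.card B
      = Nat.card (A ⊔ B : Subgroup G) * Nat.card (A ⊓ B : Subgroup G) :=
    (aux_card_sup_mul_card_inf A B).symm
  have i1 : Nat.card (A ⊓ B : Subgroup G) ≤ Nat.card (G₃ ⊓ G₄ : Subgroup G) := by
    apply Subgroup.card_le_of_le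
    exact inf_le_inf (sup_le inf_le_right inf_le_right) (sup_le inf_le_right inf_le_right)
  have i2 : Nat.card (A ⊔ B : Subgroup G) ≤ Nat.card (G₁ ⊔ G₂ : Subgroup G) := by
    apply Subgroup.card_le_of_le
    exact sup_le (sup_le (inf_le_left.trans le_sup_left) (inf_le_left.trans le_sup_right))
      (sup_le (inf_le_left.trans le_sup_left) (inf_le_left.trans le_sup_right))
  have e4 := aux_card_sup_mul_card_inf G₁ G₂
  calc Nat.card (G₁ ⊓ G₂ : Subgroup G) * Nat.card (G₁ ⊓ G₃ : Subgroup G) *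
      Nat.card (G₁ ⊓ G₄ : Subgroup G) * Nat.card (G₂ ⊓ G₃ : Subgroup G) *
      Nat.card (G₂ ⊓ G₄ : Subgroup G)
      = Nat.card (G₁ ⊓ G₂ : Subgroup G) *
          ((Nat.card (G₁ ⊓ G₃ : Subgroup G) * Nat.card (G₂ ⊓ G₃ : Subgroup G)) *
           (Nat.card (G₁ ⊓ G₄ : Subgroup G) * Nat.card (G₂ ⊓ G₄ : Subgroup G))) := by ring
    _ = Nat.card (G₁ ⊓ G₂ : Subgroup G) * Nat.card (A ⊔ B : Subgroup G) *
          Nat.card (A ⊓ B : Subgroup G) *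
          Nat.card (G₁ ⊓ G₂ ⊓ G₃ : Subgroup G) * Nat.card (G₁ ⊓ G₂ ⊓ G₄ : Subgroup G) := by
        rw [e1, e2]
        calc Nat.card (G₁ ⊓ G₂ : Subgroup G) *
            (Nat.card A * Nat.card (G₁ ⊓ G₂ ⊓ G₃ : Subgroup G) *
             (Nat.card B * Nat.card (G₁ ⊓ G₂ ⊓ G₄ : Subgroup G)))
            = Nat.card (G₁ ⊓ G₂ : Subgroup G) * (Nat.card A * Nat.card B) *
              Nat.card (G₁ ⊓ G₂ ⊓ G₃ : Subgroup G) * Nat.card (G₁ ⊓ G₂ ⊓ G₄ : Subgroup G) := by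
              ring
          _ = _ := by rw [e3]; ring
    _ ≤ Nat.card (G₁ ⊓ G₂ : Subgroup G) * Nat.card (G₁ ⊔ G₂ : Subgroup G) *
          Nat.card (G₃ ⊓ G₄ : Subgroup G) *
          Nat.card (G₁ ⊓ G₂ ⊓ G₃ : Subgroup G) * Nat.card (G₁ ⊓ G₂ ⊓ G₄ : Subgroup G) := by
        gcongr
    _ = Nat.card G₁ * Nat.card G₂ * Nat.card (G₃ ⊓ G₄ : Subgroup G) *
          Nat.card (G₁ ⊓ G₂ ⊓ G₃ : Subgroup G) * Nat.card (G₁ ⊓ G₂ ⊓ G₄ : Subgroup G) := by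
        rw [mul_comm (Nat.card (G₁ ⊓ G₂ : Subgroup G)), e4]

lemma aux_unifEntropy_coset {T : Type*} (H : Subgroup G) (f : G → T)
    (hf : ∀ u u' : G, f u' = f u ↔ u'⁻¹ * u ∈ H) :
    unifEntropy f = Real.log (Fintype.card G) - Real.log (Nat.card H) := by
  have hcard : ∀ u : G, Nat.card {u' : G // f u' = f u} = Nat.card H := by
    intro u
    refine Nat.card_congr ⟨fun x => ⟨x.1⁻¹ * u, (hf u x.1).mp x.2⟩,
      fun h => ⟨u * (h.1 : G)⁻¹, (hf u _).mpr (by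
        have : (u * (h.1 : G)⁻¹)⁻¹ * u = (h.1 : G) := by group
        rw [this]; exact h.2)⟩, fun x => ?_, fun h => ?_⟩
    · ext; simp
    · ext; simp
  have hG : (Fintype.card G : ℝ) ≠ 0 := by positivity
  simp only [unifEntropy, hcard, Finset.sum_const, Finset.card_univ, nsmul_eq_mul]
  rw [← mul_assoc, inv_mul_cancel₀ hG, one_mul]

end Aux

/-- The Ingleton inequality for random variables constructed from a finite abelian group `G`
and four subgroups: `Uᵢ` is the coset of `Gᵢ` containing a uniform element of `G`. -/
theorem ingleton_for_abelian_coset_variables {G : Type*} [CommGroup G] [Fintype G]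
    (G₁ G₂ G₃ G₄ : Subgroup G) :
    unifEntropy (fun u : G => ((QuotientGroup.mk u : G ⧸ G₁), (QuotientGroup.mk u : G ⧸ G₂))) +
    unifEntropy (fun u : G => ((QuotientGroup.mk u : G ⧸ G₁), (QuotientGroup.mk u : G ⧸ G₃))) +
    unifEntropy (fun u : G => ((QuotientGroup.mk u : G ⧸ G₁), (QuotientGroup.mk u : G ⧸ G₄))) +
    unifEntropy (fun u : G => ((QuotientGroup.mk u : G ⧸ G₂), (QuotientGroup.mk u : G ⧸ G₃))) +
    unifEntropy (fun u : G => ((QuotientGroup.mk u : G ⧸ G₂), (QuotientGroup.mk u : G ⧸ G₄))) ≥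
    unifEntropy (fun u : G => (QuotientGroup.mk u : G ⧸ G₁)) +
    unifEntropy (fun u : G => (QuotientGroup.mk u : G ⧸ G₂)) +
    unifEntropy (fun u : G => ((QuotientGroup.mk u : G ⧸ G₃), (QuotientGroup.mk u : G ⧸ G₄))) +
    unifEntropy (fun u : G => ((QuotientGroup.mk u : G ⧸ G₁), (QuotientGroup.mk u : G ⧸ G₂),
      (QuotientGroup.mk u : G ⧸ G₃))) +
    unifEntropy (fun u : G => ((QuotientGroup.mk u : G ⧸ G₁), (QuotientGroup.mk u : G ⧸ G₂),
      (QuotientGroup.mk u : G ⧸ G₄))) := by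
  have hpair : ∀ H K : Subgroup G,
      unifEntropy (fun u : G => ((QuotientGroup.mk u : G ⧸ H), (QuotientGroup.mk u : G ⧸ K)))
        = Real.log (Fintype.card G) - Real.log (Nat.card (H ⊓ K : Subgroup G)) := by
    intro H K
    exact aux_unifEntropy_coset (H ⊓ K) _ (fun u u' => by
      simp [Prod.ext_iff, QuotientGroup.eq, Subgroup.mem_inf])
  have hsingle : ∀ H : Subgroup G,
      unifEntropy (fun u : G => (QuotientGroup.mk u : G ⧸ H))
        = Real.log (Fintype.card G) - Real.log (Nat.card H) := by
    intro H
    exact aux_unifEntropy_coset H _ (fun u u' => by simp [QuotientGroup.eq])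
  have htriple : ∀ H K L : Subgroup G,
      unifEntropy (fun u : G => ((QuotientGroup.mk u : G ⧸ H), (QuotientGroup.mk u : G ⧸ K),
          (QuotientGroup.mk u : G ⧸ L)))
        = Real.log (Fintype.card G) - Real.log (Nat.card (H ⊓ K ⊓ L : Subgroup G)) := by
    intro H K L
    exact aux_unifEntropy_coset (H ⊓ K ⊓ L) _ (fun u u' => by
      simp [Prod.ext_iff, QuotientGroup.eq, Subgroup.mem_inf]; tauto)
  rw [hpair G₁ G₂, hpair G₁ G₃, hpair G₁ G₄, hpair G₂ G₃, hpair G₂ G₄, hpair G₃ G₄,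
    hsingle G₁, hsingle G₂, htriple G₁ G₂ G₃, htriple G₁ G₂ G₄]
  have key := aux_ingleton_card G₁ G₂ G₃ G₄
  have pos : ∀ H : Subgroup G, (0 : ℝ) < Nat.card H := by
    intro H
    exact_mod_cast Nat.card_pos
  have keyR : ((Nat.card (G₁ ⊓ G₂ : Subgroup G)) : ℝ) * (Nat.card (G₁ ⊓ G₃ : Subgroup G)) *
      (Nat.card (G₁ ⊓ G₄ : Subgroup G)) * (Nat.card (G₂ ⊓ G₃ : Subgroup G)) *
      (Nat.card (G₂ ⊓ G₄ : Subgroup G)) ≤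
      ((Nat.card G₁ : ℝ)) * (Nat.card G₂) * (Nat.card (G₃ ⊓ G₄ : Subgroup G)) *
      (Nat.card (G₁ ⊓ G₂ ⊓ G₃ : Subgroup G)) * (Nat.card (G₁ ⊓ G₂ ⊓ G₄ : Subgroup G)) := by
    exact_mod_cast key
  have p1 := pos (G₁ ⊓ G₂); have p2 := pos (G₁ ⊓ G₃); have p3 := pos (G₁ ⊓ G₄)
  have p4 := pos (G₂ ⊓ G₃); have p5 := pos (G₂ ⊓ G₄)
  have q1 := pos G₁; have q2 := pos G₂; have q3 := pos (G₃ ⊓ G₄)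
  have q4 := pos (G₁ ⊓ G₂ ⊓ G₃); have q5 := pos (G₁ ⊓ G₂ ⊓ G₄)
  have hlog := Real.log_le_log
    (mul_pos (mul_pos (mul_pos (mul_pos p1 p2) p3) p4) p5) keyR
  rw [Real.log_mul (mul_pos (mul_pos (mul_pos p1 p2) p3) p4).ne' p5.ne',
    Real.log_mul (mul_pos (mul_pos p1 p2) p3).ne' p4.ne',
    Real.log_mul (mul_pos p1 p2).ne' p3.ne', Real.log_mul p1.ne' p2.ne',
    Real.log_mul (mul_pos (mul_pos (mul_pos q1 q2) q3) q4).ne' q5.ne',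
    Real.log_mul (mul_pos (mul_pos q1 q2) q3).ne' q4.ne',
    Real.log_mul (mul_pos q1 q2).ne' q3.ne', Real.log_mul q1.ne' q2.ne'] at hlog
  linarith
end

section
/- The function h on subsets of {1,2,3,4} with h({i}) = log 13 for each i, h({1,2}) = log 6 + log 13, h({3,4}) = log 13 + log 12, h({i,j}) = log 13 + log 4 for the pairs {1,3},{1,4},{2,3},{2,4}, and h(A) = log 13 + log 12 for |A| ≥ 3, violates the Ingleton inequality: h({1,2}) + h({1,3}) + h({1,4}) + h({2,3}) + h({2,4}) < h({1}) + h({2}) + h({3,4}) + h({1,2,3}) + h({1,2,4}). -/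
/-- The entropy function of the projective-plane construction of Zhang–Yeung (on ground set
`{1,2,3,4}`, indexed by `Fin 4`) violates the Ingleton inequality. -/
theorem projective_plane_violates_ingleton
    (h : Finset (Fin 4) → ℝ)
    (h0 : h ∅ = 0)
    (hsingle : ∀ i : Fin 4, h {i} = Real.log 13)
    (h12 : h {0, 1} = Real.log 6 + Real.log 13)
    (h34 : h {2, 3} = Real.log 13 + Real.log 12)
    (h13 : h {0, 2} = Real.log 13 + Real.log 4)
    (h14 : h {0, 3} = Real.log 13 + Real.log 4)
    (h23 : h {1, 2} = Real.log 13 + Real.log 4)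
    (h24 : h {1, 3} = Real.log 13 + Real.log 4)
    (hbig : ∀ A : Finset (Fin 4), 3 ≤ A.card → h A = Real.log 13 + Real.log 12) :
    h {0, 1} + h {0, 2} + h {0, 3} + h {1, 2} + h {1, 3} <
      h {0} + h {1} + h {2, 3} + h {0, 1, 2} + h {0, 1, 3} := by
  rw [h12, h13, h14, h23, h24, h34, hsingle, hsingle,
    hbig {0, 1, 2} (by decide), hbig {0, 1, 3} (by decide)]
  have key : Real.log 6 + 4 * Real.log 4 < 3 * Real.log 12 := by
    have h1 : Real.log 6 + 4 * Real.log 4 = Real.log 1536 := by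
      rw [show (1536 : ℝ) = 6 * 4 ^ 4 by norm_num, Real.log_mul (by norm_num) (by positivity),
        Real.log_pow]
      ring
    have h2 : (3 : ℝ) * Real.log 12 = Real.log 1728 := by
      rw [show (1728 : ℝ) = 12 ^ 3 by norm_num, Real.log_pow]
      ring
    rw [h1, h2]
    exact Real.log_lt_log (by norm_num) (by norm_num)
  linarith
end
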